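/- arXiv:2312.12528 — 3 statements merged into one kernel-verified Lean document; each statement's English description precedes it below -/
import Mathlib

section
/- Let R be a finite direct product of commutative Noetherian local rings and M a finitely generated R-module. Then GL_n(R) acts transitively on the set of surjective R-module homomorphisms R^n → M: if F₁, F₂ : R^n → M are surjections, there exists g ∈ GL_n(R) (an R-module automorphism of R^n) with F₂ = F₁ ∘ g. -/
/-!
Fix a maximal ideal `𝔪` of a ring `S`. Over the field `S ⧸ 𝔪` two surjections from the same
finite-dimensional space have kernels of equal dimension, so they differ by an automorphism `g`.
Lift `g` to an endomorphism `φ` of `S^n`. The defect `F₂ - F₁ ∘ φ` then lands in `𝔪 • M`, which is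
the image of `𝔪 • S^n` under `F₁`, so correcting `φ` by a map that vanishes modulo `𝔪` gives
`F₂ = F₁ ∘ φ` exactly, with `det φ ∉ 𝔪`. Over `∏ i, R i`, do this for each factor and glue with
the idempotents `Pi.single i 1`: the `i`-th component of the determinant of the glued map is a
unit of the local ring `R i`.
-/

open Function TensorProduct

theorem TensorProduct.ker_mk_quotient_one {S M : Type*} [CommRing S] [AddCommGroup M]
    [Module S M] (I : Ideal S) : LinearMap.ker (TensorProduct.mk S (S ⧸ I) M 1) = I • ⊤ := by
  rw [← quotTensorEquivQuotSMul_symm_comp_mkQ, LinearEquiv.ker_comp, Submodule.ker_mkQ]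

namespace LinearMap

section DivisionRing

variable {K V W : Type*} [DivisionRing K] [AddCommGroup V] [Module K V] [AddCommGroup W]
  [Module K W]

theorem exists_linearEquiv_prod_ker {F : V →ₗ[K] W} (hF : Surjective F) :
    ∃ e : V ≃ₗ[K] W × ker F, ∀ x, (e x).1 = F x := by
  obtain ⟨q, hq⟩ := (ker F).exists_isCompl
  refine ⟨equivProdOfSurjectiveOfIsCompl F ((ker F).projectionOnto q hq)
    (range_eq_top.2 hF) (Submodule.range_projectionOnto hq) ?_, fun _ => rfl⟩
  rwa [Submodule.ker_projectionOnto]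

theorem exists_linearEquiv_comp_eq_of_surjective [FiniteDimensional K V] {F₁ F₂ : V →ₗ[K] W}
    (h₁ : Surjective F₁) (h₂ : Surjective F₂) : ∃ g : V ≃ₗ[K] V, F₂ = F₁ ∘ₗ g := by
  obtain ⟨e₁, he₁⟩ := exists_linearEquiv_prod_ker h₁
  obtain ⟨e₂, he₂⟩ := exists_linearEquiv_prod_ker h₂
  have hker : Module.finrank K (ker F₂) = Module.finrank K (ker F₁) := by
    have rank₁ := F₁.finrank_range_add_finrank_ker
    have rank₂ := F₂.finrank_range_add_finrank_ker
    rw [range_eq_top.2 h₁, finrank_top] at rank₁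
    rw [range_eq_top.2 h₂, finrank_top] at rank₂
    omega
  refine ⟨e₂ ≪≫ₗ (LinearEquiv.refl K W).prodCongr (.ofFinrankEq _ _ hker) ≪≫ₗ e₁.symm, ?_⟩
  ext x
  simp [← he₁, he₂]

end DivisionRing

section BaseChange

variable {S P M : Type*} [CommRing S] [AddCommGroup P] [Module S P] [AddCommGroup M] [Module S M]

theorem baseChange_quotient_eq_zero_iff (I : Ideal S) (f : P →ₗ[S] M) :
    f.baseChange (S ⧸ I) = 0 ↔ range f ≤ I • ⊤ := by
  rw [← TensorProduct.ker_mk_quotient_one]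
  constructor
  · rintro hf _ ⟨x, rfl⟩
    simpa using congr($hf (1 ⊗ₜ x))
  · intro hf
    refine TensorProduct.AlgebraTensorModule.ext fun a x => ?_
    have hfx : (1 : S ⧸ I) ⊗ₜ[S] f x = 0 := hf ⟨x, rfl⟩
    rw [baseChange_tmul, zero_apply, ← mul_one a, ← smul_eq_mul, ← smul_tmul', hfx, smul_zero]

theorem exists_baseChange_eq {A N : Type*} [CommRing A] [Algebra S A] [AddCommGroup N]
    [Module S N] [Module.Projective S P] (hA : Surjective (algebraMap S A))
    (g : A ⊗[S] P →ₗ[A] A ⊗[S] N) : ∃ φ : P →ₗ[S] N, φ.baseChange A = g := by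
  obtain ⟨φ, hφ⟩ := Module.projective_lifting_property (TensorProduct.mk S A N 1)
    (g.restrictScalars S ∘ₗ TensorProduct.mk S A P 1) (TensorProduct.mk_surjective S N A hA)
  refine ⟨φ, TensorProduct.AlgebraTensorModule.ext fun a x => ?_⟩
  have hφx : (1 : A) ⊗ₜ[S] φ x = g (1 ⊗ₜ x) := congr($hφ x)
  rw [baseChange_tmul, ← mul_one a, ← smul_eq_mul, ← smul_tmul', ← smul_tmul', hφx, map_smul]

theorem exists_comp_eq_of_baseChange_eq_zero [Module.Projective S P] (I : Ideal S)
    {F G : P →ₗ[S] M} (hF : Surjective F) (hG : G.baseChange (S ⧸ I) = 0) :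
    ∃ C : P →ₗ[S] P, F ∘ₗ C = G ∧ C.baseChange (S ⧸ I) = 0 := by
  set p : Submodule S P := I • ⊤
  have hmap : p.map F = I • ⊤ := by
    rw [Submodule.map_smul'', Submodule.map_top, range_eq_top.2 hF]
  rw [baseChange_quotient_eq_zero_iff, ← hmap] at hG
  obtain ⟨C, hC⟩ := Module.projective_lifting_property (F.submoduleMap p)
    (G.codRestrict _ fun x => hG ⟨x, rfl⟩) (F.submoduleMap_surjective p)
  refine ⟨p.subtype ∘ₗ C, ext fun x => congr(($hC x : M)), ?_⟩
  exact (baseChange_quotient_eq_zero_iff I _).2 <|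
    (range_comp_le_range _ _).trans_eq p.range_subtype

theorem exists_comp_eq_of_baseChange_eq [Module.Projective S P] (I : Ideal S)
    {F₁ F₂ : P →ₗ[S] M} {φ : P →ₗ[S] P} (h₁ : Surjective F₁)
    (h : F₂.baseChange (S ⧸ I) = (F₁ ∘ₗ φ).baseChange (S ⧸ I)) :
    ∃ ψ : P →ₗ[S] P, F₂ = F₁ ∘ₗ ψ ∧ ψ.baseChange (S ⧸ I) = φ.baseChange (S ⧸ I) := by
  have hdefect : (F₂ - F₁ ∘ₗ φ).baseChange (S ⧸ I) = 0 := by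
    rw [baseChange_sub]
    exact sub_eq_zero.2 h
  obtain ⟨C, hC, hC₀⟩ := exists_comp_eq_of_baseChange_eq_zero I h₁ hdefect
  exact ⟨φ + C, by rw [comp_add, hC, add_sub_cancel], by rw [baseChange_add, hC₀, add_zero]⟩

theorem exists_comp_eq_det_notMem [Module.Free S P] [Module.Finite S P] (𝔪 : Ideal S)
    [𝔪.IsMaximal] {F₁ F₂ : P →ₗ[S] M} (h₁ : Surjective F₁) (h₂ : Surjective F₂) :
    ∃ φ : P →ₗ[S] P, F₂ = F₁ ∘ₗ φ ∧ LinearMap.det φ ∉ 𝔪 := by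
  let := Ideal.Quotient.field 𝔪
  obtain ⟨g, hg⟩ := exists_linearEquiv_comp_eq_of_surjective (F₁ := F₁.baseChange (S ⧸ 𝔪))
    (F₂ := F₂.baseChange (S ⧸ 𝔪)) (F₁.lTensor_surjective _ h₁) (F₂.lTensor_surjective _ h₂)
  obtain ⟨φ₀, hφ₀⟩ := exists_baseChange_eq Ideal.Quotient.mk_surjective g.toLinearMap
  have hfactor : F₂.baseChange (S ⧸ 𝔪) = (F₁ ∘ₗ φ₀).baseChange (S ⧸ 𝔪) := by
    rw [baseChange_comp, hφ₀]
    exact hg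
  obtain ⟨φ, hφ, hφφ₀⟩ := exists_comp_eq_of_baseChange_eq 𝔪 h₁ hfactor
  refine ⟨φ, hφ, fun hmem => g.isUnit_det'.ne_zero ?_⟩
  rw [← hφ₀, ← hφφ₀, det_baseChange, Ideal.Quotient.algebraMap_eq,
    Ideal.Quotient.eq_zero_iff_mem.2 hmem]

end BaseChange

theorem comp_sum_smul_eq {R P M ι : Type*} [CommSemiring R] [AddCommMonoid P] [Module R P]
    [AddCommMonoid M] [Module R M] [Fintype ι] {c : ι → R} (hc : ∑ i, c i = 1)
    {F G : P →ₗ[R] M} {φ : ι → P →ₗ[R] P} (hφ : ∀ i, F ∘ₗ φ i = G) :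
    F ∘ₗ ∑ i, c i • φ i = G :=
  calc F ∘ₗ ∑ i, c i • φ i = ∑ i, c i • (F ∘ₗ φ i) := by ext; simp
    _ = G := by simp only [hφ, ← Finset.sum_smul, hc, one_smul]

theorem det_sum_single_smul_apply {ι κ : Type*} [Fintype ι] [DecidableEq ι] [Fintype κ]
    [DecidableEq κ] {R : ι → Type*} [∀ i, CommRing (R i)]
    (φ : ι → Module.End (∀ i, R i) (κ → ∀ i, R i)) (i : ι) :
    (∑ j, (Pi.single j 1 : ∀ i, R i) • φ j).det i = (φ i).det i := by
  have hmap : (toMatrix' (∑ j, (Pi.single j 1 : ∀ i, R i) • φ j)).map (Pi.evalRingHom R i) =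
      (toMatrix' (φ i)).map (Pi.evalRingHom R i) := by
    ext a b
    simp only [Matrix.map_apply, Matrix.sum_apply, Matrix.smul_apply, map_sum, map_smul,
      Pi.evalRingHom_apply, smul_eq_mul, Pi.mul_apply]
    rw [Fintype.sum_eq_single i fun j hj => by rw [Pi.single_eq_of_ne hj.symm, zero_mul],
      Pi.single_eq_same, one_mul]
  simpa only [← LinearMap.det_toMatrix', ← RingHom.mapMatrix_apply, ← RingHom.map_det,
    Pi.evalRingHom_apply] using congrArg Matrix.det hmap

end LinearMap

theorem statement1_general {ι : Type*} [Fintype ι] (R : ι → Type*)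
    [∀ i, CommRing (R i)] [∀ i, IsLocalRing (R i)]
    {M : Type*} [AddCommGroup M] [Module (∀ i, R i) M]
    (n : ℕ) (F₁ F₂ : (Fin n → ∀ i, R i) →ₗ[∀ i, R i] M)
    (h₁ : Function.Surjective F₁) (h₂ : Function.Surjective F₂) :
    ∃ g : (Fin n → ∀ i, R i) ≃ₗ[∀ i, R i] (Fin n → ∀ i, R i),
      F₂ = F₁ ∘ₗ (g : (Fin n → ∀ i, R i) →ₗ[∀ i, R i] (Fin n → ∀ i, R i)) := by
  classical
  have local_factor (i : ι) : ∃ φ : Module.End (∀ i, R i) (Fin n → ∀ i, R i),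
      F₂ = F₁ ∘ₗ φ ∧ IsUnit (LinearMap.det φ i) := by
    let 𝔪 := (IsLocalRing.maximalIdeal (R i)).comap (Pi.evalRingHom R i)
    have : 𝔪.IsMaximal := Ideal.comap_isMaximal_of_surjective _ (surjective_eval i)
    obtain ⟨φ, hφ, hdet⟩ := LinearMap.exists_comp_eq_det_notMem 𝔪 h₁ h₂
    exact ⟨φ, hφ, IsLocalRing.notMem_maximalIdeal.1 hdet⟩
  choose φ hφ hdet using local_factor
  have hunit : IsUnit (LinearMap.det (∑ i, Pi.single i 1 • φ i)) :=
    Pi.isUnit_iff.2 fun i => LinearMap.det_sum_single_smul_apply φ i ▸ hdet i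
  have hone : ∑ i, (Pi.single i 1 : ∀ i, R i) = 1 := Finset.univ_sum_single 1
  refine ⟨LinearMap.equivOfIsUnitDet hunit, ?_⟩
  rw [LinearMap.coe_equivOfIsUnitDet, LinearMap.comp_sum_smul_eq hone fun i => (hφ i).symm]

/-- Let `R = ∏ i, R i` be a finite direct product of commutative
Noetherian local rings and `M` a finitely generated `R`-module.  Then `GL_n(R)` acts
transitively on surjections `R^n → M`: for any two surjective `R`-linear maps
`F₁ F₂ : R^n → M` there is an `R`-module automorphism `g` of `R^n` with `F₂ = F₁ ∘ g`. -/
theorem statement1 {ι : Type*} [Fintype ι] (R : ι → Type*)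
    [∀ i, CommRing (R i)] [∀ i, IsNoetherianRing (R i)] [∀ i, IsLocalRing (R i)]
    {M : Type*} [AddCommGroup M] [Module (∀ i, R i) M] [Module.Finite (∀ i, R i) M]
    (n : ℕ) (F₁ F₂ : (Fin n → ∀ i, R i) →ₗ[∀ i, R i] M)
    (h₁ : Function.Surjective F₁) (h₂ : Function.Surjective F₂) :
    ∃ g : (Fin n → ∀ i, R i) ≃ₗ[∀ i, R i] (Fin n → ∀ i, R i),
      F₂ = F₁ ∘ₗ (g : (Fin n → ∀ i, R i) →ₗ[∀ i, R i] (Fin n → ∀ i, R i)) :=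
  statement1_general R n F₁ F₂ h₁ h₂
end

section
/- Let (R, π, F_q) be a discrete valuation ring with residue field of cardinality q, d ≥ 0 an integer, and M a finite R-module of type μ (i.e., M ≅ ⊕_i R/π^{μ_i}R) with μ₁' ≤ d, where μ₁' is the number of nonzero parts of μ. Then the number of surjective R-module homomorphisms R^d → M equals q^{d·|μ|} · (q^{-1};q^{-1})_d / (q^{-1};q^{-1})_{d−μ₁'}, where (a;q)_n = ∏_{i=0}^{n−1}(1−a q^i). -/
/-!
A surjection `R^d → M` is the same as a `d`-tuple spanning `M`. By Nakayama, a tuple spans `M`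
iff its image spans `M/πM ≅ 𝔽_q^l`, and reduction `M^d → (𝔽_q^l)^d` is a surjective group
homomorphism, so every fibre has `|M|^d / q^{ld} = q^{d|μ|} / q^{ld}` elements. A `d`-tuple spans
`𝔽_q^l` iff the `l` rows of the `l × d` matrix it forms are independent, and there are
`∏_{i<l} (q^d - q^i) = q^{ld} (q⁻¹;q⁻¹)_d / (q⁻¹;q⁻¹)_{d-l}` such tuples.
-/

open Function Submodule Module IsLocalRing

theorem AddMonoidHom.card_preimage_of_surjective {A B : Type*} [AddGroup A] [AddGroup B]
    (φ : A →+ B) (hφ : Surjective φ) (s : Set B) :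
    Nat.card (φ ⁻¹' s) = Nat.card φ.ker * Nat.card s := by
  choose σ hσ using hφ
  have hker (x : φ.ker) : φ x = 0 := x.2
  rw [← Nat.card_prod]
  refine Nat.card_congr
    { toFun := fun a => (⟨a - σ (φ a), by simp [hσ]⟩, ⟨φ a, a.2⟩)
      invFun := fun x => ⟨x.1 + σ x.2, by simp [hσ, hker]⟩
      left_inv := fun a => by simp
      right_inv := fun x => by ext <;> simp [hσ, hker] }

theorem span_range_eq_top_iff_linearIndependent_transpose {k : Type*} [Field k] {d l : ℕ}
    (w : Fin d → Fin l → k) :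
    span k (Set.range w) = ⊤ ↔ LinearIndependent k (fun i j => w j i) := by
  let A : Matrix (Fin l) (Fin d) k := Matrix.of fun i j => w j i
  rw [Submodule.eq_top_iff_finrank_eq, linearIndependent_iff_card_eq_finrank_span]
  have hcols : A.rank = finrank k (span k (Set.range w)) := A.rank_eq_finrank_span_cols
  have hrows : A.rank = (Set.range fun i j => w j i).finrank k := A.rank_eq_finrank_span_row
  simp only [finrank_fin_fun, Fintype.card_fin]
  rw [← hcols, ← hrows, eq_comm]

theorem card_spanning_tuples (k : Type*) [Field k] [Fintype k] {d l : ℕ} (hld : l ≤ d) :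
    Nat.card {w : Fin d → Fin l → k // span k (Set.range w) = ⊤} =
      ∏ i : Fin l, (Fintype.card k ^ d - Fintype.card k ^ (i : ℕ)) := by
  rw [Nat.card_congr ((Equiv.piComm _).subtypeEquiv
      (q := fun s : Fin l → Fin d → k => LinearIndependent k s)
      fun w => span_range_eq_top_iff_linearIndependent_transpose w),
    card_linearIndependent (by simpa using hld), finrank_fin_fun]

theorem card_spanning_tuples_residueField (R : Type*) [CommRing R] [IsLocalRing R]
    [Finite (ResidueField R)] {d l : ℕ} (hld : l ≤ d) :
    Nat.card {w : Fin d → Fin l → ResidueField R // span R (Set.range w) = ⊤} =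
      ∏ i : Fin l, (Nat.card (ResidueField R) ^ d - Nat.card (ResidueField R) ^ (i : ℕ)) := by
  have := Fintype.ofFinite (ResidueField R)
  rw [Nat.card_eq_fintype_card (α := ResidueField R), ← card_spanning_tuples _ hld]
  refine Nat.card_congr (Equiv.subtypeEquivRight fun w => ?_)
  rw [← restrictScalars_span R (ResidueField R) residue_surjective, restrictScalars_eq_top_iff]

theorem IsLocalRing.map_eq_top_iff_of_ker_le {R M N : Type*} [CommRing R] [IsLocalRing R]
    [AddCommGroup M] [Module R M] [Module.Finite R M] [AddCommGroup N] [Module R N]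
    {p : M →ₗ[R] N} (hp : Surjective p) (hker : LinearMap.ker p ≤ maximalIdeal R • ⊤)
    {S : Submodule R M} : S.map p = ⊤ ↔ S = ⊤ := by
  refine ⟨fun h => ?_, fun h => by rw [h, Submodule.map_top, LinearMap.range_eq_top.2 hp]⟩
  rw [← IsLocalRing.map_mkQ_eq_top, Submodule.map_mkQ_eq_top, sup_comm, eq_top_iff]
  calc ⊤ = S ⊔ LinearMap.ker p := by rw [← comap_map_eq, h, comap_top]
    _ ≤ _ := sup_le_sup_left hker _

noncomputable def surjectiveLinearMapEquivSpanningTuples (R M ι : Type*) [CommRing R]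
    [AddCommGroup M] [Module R M] [Finite ι] :
    {f : (ι → R) →ₗ[R] M // Surjective f} ≃ {v : ι → M // span R (Set.range v) = ⊤} :=
  (((Pi.basisFun R ι).constr ℕ).toEquiv.subtypeEquiv fun v => by
    rw [LinearEquiv.coe_toEquiv, ← LinearMap.range_eq_top, Basis.constr_range]).symm

theorem card_surjective_linearMap_mul_card_pow {R M N : Type*} [CommRing R] [IsLocalRing R]
    [AddCommGroup M] [Module R M] [Finite M] [AddCommGroup N] [Module R N]
    {p : M →ₗ[R] N} (hp : Surjective p) (hker : LinearMap.ker p ≤ maximalIdeal R • ⊤)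
    (ι : Type*) [Finite ι] :
    Nat.card {f : (ι → R) →ₗ[R] M // Surjective f} * Nat.card N ^ Nat.card ι =
      Nat.card M ^ Nat.card ι * Nat.card {w : ι → N // span R (Set.range w) = ⊤} := by
  let Φ : (ι → M) →+ (ι → N) := (p.compLeft ι).toAddMonoidHom
  have hΦ : Surjective Φ := fun w =>
    ⟨fun i => (hp (w i)).choose, funext fun i => (hp (w i)).choose_spec⟩
  have hspan : {v : ι → M // span R (Set.range v) = ⊤} ≃
      Φ ⁻¹' {w | span R (Set.range w) = ⊤} :=
    Equiv.subtypeEquivRight fun v => by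
      simp only [Set.mem_preimage, Set.mem_ofPred_eq]
      rw [← IsLocalRing.map_eq_top_iff_of_ker_le hp hker, map_span, ← Set.range_comp]
      rfl
  have htotal := Φ.card_preimage_of_surjective hΦ Set.univ
  rw [Set.preimage_univ, Nat.card_univ, Nat.card_univ, Nat.card_fun, Nat.card_fun] at htotal
  rw [Nat.card_congr ((surjectiveLinearMapEquivSpanningTuples R M ι).trans hspan),
    Φ.card_preimage_of_surjective hΦ, htotal, mul_right_comm]
  rfl

theorem Submodule.exists_eq_smul_of_factor_eq_zero {R : Type*} [CommRing R] {I J : Ideal R}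
    {a : R} (hIJ : I ≤ J) (hJ : J ≤ Ideal.span {a}) {z : R ⧸ I} (hz : factor hIJ z = 0) :
    ∃ y : R ⧸ I, z = a • y := by
  obtain ⟨r, rfl⟩ := Submodule.mkQ_surjective I z
  obtain ⟨c, rfl⟩ := Ideal.mem_span_singleton'.mp (hJ ((Submodule.Quotient.mk_eq_zero J).mp hz))
  exact ⟨mkQ I c, by rw [← LinearMap.map_smul, smul_eq_mul, mul_comm]⟩

section DiscreteValuationRing

variable {R : Type*} [CommRing R] [IsDomain R] [IsDiscreteValuationRing R] {π : R}

theorem card_quotient_span_pow (hπ : Irreducible π) (n : ℕ) :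
    Nat.card (R ⧸ Ideal.span {π} ^ n) = Nat.card (ResidueField R) ^ n := by
  rw [← (IsDiscreteValuationRing.irreducible_iff_uniformizer π).mp hπ]
  have := cardQuot_pow_of_prime (IsDiscreteValuationRing.not_a_field R) (i := n)
  rwa [cardQuot_apply, cardQuot_apply] at this

theorem exists_surjective_residue_of_linearEquiv (hπ : Irreducible π) {ι M : Type*}
    [AddCommGroup M] [Module R M] {μ : ι → ℕ} (hμ : ∀ i, 0 < μ i)
    (e : M ≃ₗ[R] ∀ i, R ⧸ Ideal.span {π} ^ μ i) :
    ∃ p : M →ₗ[R] ι → ResidueField R,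
      Surjective p ∧ LinearMap.ker p ≤ maximalIdeal R • ⊤ := by
  have hmax := (IsDiscreteValuationRing.irreducible_iff_uniformizer π).mp hπ
  have hle (i : ι) : Ideal.span {π} ^ μ i ≤ maximalIdeal R :=
    hmax ▸ Ideal.pow_le_self (hμ i).ne'
  let p : (∀ i, R ⧸ Ideal.span {π} ^ μ i) →ₗ[R] ι → ResidueField R :=
    LinearMap.pi fun i => (factor (hle i)).comp (LinearMap.proj i)
  have hp : Surjective p := fun y =>
    ⟨fun i => (factor_surjective (hle i) (y i)).choose,
      funext fun i => (factor_surjective (hle i) (y i)).choose_spec⟩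
  refine ⟨p.comp e.toLinearMap, hp.comp e.surjective, fun x hx => ?_⟩
  choose y hy using fun i =>
    exists_eq_smul_of_factor_eq_zero (hle i) hmax.le (congrFun hx i)
  have hxy : x = π • e.symm y := by
    rw [← map_smul, eq_comm, e.symm_apply_eq]
    exact funext fun i => (hy i).symm
  exact hxy ▸ smul_mem_smul (hmax ▸ Ideal.mem_span_singleton_self π) trivial

end DiscreteValuationRing

theorem prod_range_pow_sub_pow_mul {K : Type*} [Field K] {q : K} (hq : q ≠ 0) {d l : ℕ}
    (hld : l ≤ d) :
    (∏ i ∈ Finset.range l, (q ^ d - q ^ i)) *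
        ∏ i ∈ Finset.range (d - l), (1 - q⁻¹ ^ (i + 1)) =
      q ^ (l * d) * ∏ i ∈ Finset.range d, (1 - q⁻¹ ^ (i + 1)) := by
  induction l with
  | zero => simp
  | succ l ih =>
    have hdl : d - l = d - (l + 1) + 1 := by omega
    have hpow : q ^ d * q⁻¹ ^ (d - l) = q ^ l := by
      rw [inv_pow, ← pow_sub₀ q hq (Nat.sub_le d l), Nat.sub_sub_self (by omega)]
    have ih := ih (by omega)
    rw [hdl, Finset.prod_range_succ] at ih
    rw [hdl] at hpow
    rw [Finset.prod_range_succ]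
    linear_combination q ^ d * ih + (∏ i ∈ Finset.range l, (q ^ d - q ^ i)) *
      (∏ i ∈ Finset.range (d - (l + 1)), (1 - q⁻¹ ^ (i + 1))) * hpow

theorem statement2_general (R : Type*) [CommRing R] [IsDomain R] [IsDiscreteValuationRing R]
    (π : R) (hπ : Irreducible π)
    (q : ℕ) [Finite (IsLocalRing.ResidueField R)]
    (hq : Nat.card (IsLocalRing.ResidueField R) = q)
    (d l : ℕ) (hld : l ≤ d)
    (μ : Fin l → ℕ) (hμpos : ∀ i, 0 < μ i)
    (M : Type*) [AddCommGroup M] [Module R M]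
    (e : M ≃ₗ[R] ∀ i : Fin l, R ⧸ (Ideal.span {π} ^ (μ i))) :
    (Nat.card {f : (Fin d → R) →ₗ[R] M // Function.Surjective f} : ℚ) =
      (q : ℚ) ^ (d * ∑ i, μ i) *
        (∏ i ∈ Finset.range d, (1 - ((q : ℚ)⁻¹) ^ (i + 1))) /
        (∏ i ∈ Finset.range (d - l), (1 - ((q : ℚ)⁻¹) ^ (i + 1))) := by
  have hq1 : 1 < q := hq ▸ Finite.one_lt_card
  obtain ⟨p, hp, hker⟩ := exists_surjective_residue_of_linearEquiv hπ hμpos e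
  have hcardM : Nat.card M = q ^ ∑ i, μ i := by
    simp only [Nat.card_congr e.toEquiv, Nat.card_pi, card_quotient_span_pow hπ, hq,
      Finset.prod_pow_eq_pow_sum]
  have : Finite M := Nat.finite_of_card_ne_zero (hcardM ▸ pow_ne_zero _ (by omega))
  have hcount := card_surjective_linearMap_mul_card_pow hp hker (Fin d)
  rw [card_spanning_tuples_residueField R hld, Nat.card_fun, hcardM, Nat.card_fin, Nat.card_fin,
    hq] at hcount
  have hcountQ : (Nat.card {f : (Fin d → R) →ₗ[R] M // Surjective f} : ℚ) * q ^ (l * d) =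
      q ^ (d * ∑ i, μ i) * ∏ i ∈ Finset.range l, ((q : ℚ) ^ d - q ^ i) := by
    rw [← Fin.prod_univ_eq_prod_range]
    have := congrArg (Nat.cast : ℕ → ℚ) hcount
    push_cast [Nat.cast_sub (Nat.pow_le_pow_right hq1.le (Fin.is_lt _ |>.le.trans hld)),
      ← pow_mul] at this
    rwa [mul_comm (∑ i, μ i)] at this
  have hden : ∏ i ∈ Finset.range (d - l), (1 - ((q : ℚ)⁻¹) ^ (i + 1)) ≠ 0 :=
    Finset.prod_ne_zero_iff.mpr fun i _ => sub_ne_zero.mpr <| ne_of_gt <|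
      pow_lt_one₀ (by positivity) (inv_lt_one_of_one_lt₀ (by exact_mod_cast hq1)) i.succ_ne_zero
  have hq0 : (q : ℚ) ≠ 0 := Nat.cast_ne_zero.mpr (by omega)
  rw [eq_div_iff hden]
  refine mul_right_cancel₀ (pow_ne_zero (l * d) hq0) ?_
  linear_combination (∏ i ∈ Finset.range (d - l), (1 - ((q : ℚ)⁻¹) ^ (i + 1))) * hcountQ +
    (q : ℚ) ^ (d * ∑ i, μ i) * prod_range_pow_sub_pow_mul hq0 hld

/-- Let `(R, π, 𝔽_q)` be a DVR with uniformizer `π` and finite residue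
field of cardinality `q`, let `d ≥ 0`, and let `M` be a finite `R`-module of type
`μ = (μ₁ ≥ ⋯ ≥ μ_l > 0)` (i.e. `M ≅ ⨁ᵢ R/π^{μ i}`) with `l = μ₁' ≤ d` nonzero parts.
Then the number of surjective `R`-linear maps `R^d → M` equals
`q^{d|μ|} · (q⁻¹;q⁻¹)_d / (q⁻¹;q⁻¹)_{d-l}`, where `(a;q)_n = ∏_{i=0}^{n-1} (1 - a qⁱ)`. -/
theorem statement2 (R : Type*) [CommRing R] [IsDomain R] [IsDiscreteValuationRing R]
    (π : R) (hπ : Irreducible π)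
    (q : ℕ) [Finite (IsLocalRing.ResidueField R)]
    (hq : Nat.card (IsLocalRing.ResidueField R) = q)
    (d l : ℕ) (hld : l ≤ d)
    (μ : Fin l → ℕ) (hμpos : ∀ i, 0 < μ i) (hμanti : ∀ i j : Fin l, i ≤ j → μ j ≤ μ i)
    (M : Type*) [AddCommGroup M] [Module R M]
    (e : M ≃ₗ[R] ∀ i : Fin l, R ⧸ (Ideal.span {π} ^ (μ i))) :
    (Nat.card {f : (Fin d → R) →ₗ[R] M // Function.Surjective f} : ℚ) =
      (q : ℚ) ^ (d * ∑ i, μ i) *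
        (∏ i ∈ Finset.range d, (1 - ((q : ℚ)⁻¹) ^ (i + 1))) /
        (∏ i ∈ Finset.range (d - l), (1 - ((q : ℚ)⁻¹) ^ (i + 1))) :=
  statement2_general R π hπ q hq d l hld μ hμpos M e
end

section
/- (Functional equation for the (2,2) link, m=1) With f_{d,1}(t,q) = ∑_{r=0}^d (−1)^r q^{r(r−1)/2} t^r [d choose r]_q (t q^{d−r+1}; q)_r, the functional equation f_{d,1}(t,q) = q^{d²} t^{2d} f_{d,1}(q^{−d} t^{−1}, q) holds as an identity of rational functions (equivalently, of Laurent polynomials in t with coefficients in ℚ(q)). -/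
/-!
Both sides equal `∑ₖ q^{dk} t^{2k} [d k]_q (t; q)_{d-k}`. On the left, expand each
`(t q^{d-r+1}; q)_r` by Cauchy's `q`-binomial theorem, put `r = k + j` and use
`[d, k+j]_q [k+j, k]_q = [d, k]_q [d-k, j]_q`. On the right, reversing the factors turns
`(q^{1-r} t⁻¹; q)_r` into `(-1)^r t^{-r} q^{-C(r,2)} (t; q)_r`, after which the symmetry
`[d, r]_q = [d, d-r]_q` reflects the sum.
-/

open Finset

theorem Nat.choose_two_succ (n : ℕ) : (n + 1).choose 2 = n.choose 2 + n := by
  rw [Nat.choose_succ_succ', Nat.choose_one_right, add_comm]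

theorem Nat.choose_two_add (a b : ℕ) : (a + b).choose 2 = a.choose 2 + b.choose 2 + a * b := by
  induction b with
  | zero => simp
  | succ b ih => rw [← add_assoc, Nat.choose_two_succ, ih, Nat.choose_two_succ]; ring

theorem Nat.two_mul_choose_two_add_self (k : ℕ) : 2 * k.choose 2 + k = k * k := by
  induction k with
  | zero => rfl
  | succ k ih => rw [Nat.choose_two_succ]; linarith

theorem Finset.sum_range_sum_range_succ_comm {M : Type*} [AddCommMonoid M] (F : ℕ → ℕ → M)
    (d : ℕ) :
    ∑ r ∈ range (d + 1), ∑ k ∈ range (r + 1), F r k =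
      ∑ k ∈ range (d + 1), ∑ j ∈ range (d - k + 1), F (k + j) k := by
  simp only [range_eq_Ico]
  rw [← sum_Ico_Ico_comm 0 (d + 1) fun k r => F r k]
  refine sum_congr rfl fun k hk => ?_
  rw [sum_Ico_eq_sum_range, ← range_eq_Ico,
    Nat.sub_add_comm (Nat.lt_succ_iff.mp (mem_Ico.mp hk).2)]

section CommRing

variable {R : Type*} [CommRing R]

def qPochhammer (q x : R) (n : ℕ) : R := ∏ i ∈ range n, (1 - x * q ^ i)

def qBinomial (q : R) : ℕ → ℕ → R
  | _, 0 => 1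
  | 0, _ + 1 => 0
  | n + 1, k + 1 => qBinomial q n (k + 1) + q ^ (n - k) * qBinomial q n k

variable (q : R)

@[simp] theorem qPochhammer_zero (x : R) : qPochhammer q x 0 = 1 := prod_range_zero _

theorem qPochhammer_succ (x : R) (n : ℕ) :
    qPochhammer q x (n + 1) = qPochhammer q x n * (1 - x * q ^ n) :=
  prod_range_succ _ _

theorem qPochhammer_self_succ (n : ℕ) :
    qPochhammer q q (n + 1) = qPochhammer q q n * (1 - q ^ (n + 1)) := by
  rw [qPochhammer_succ, pow_succ']

@[simp] theorem qBinomial_zero_right (n : ℕ) : qBinomial q n 0 = 1 := by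
  cases n <;> rfl

theorem qBinomial_succ_succ (n k : ℕ) :
    qBinomial q (n + 1) (k + 1) = qBinomial q n (k + 1) + q ^ (n - k) * qBinomial q n k := rfl

theorem qBinomial_eq_zero_of_lt {n k : ℕ} (h : n < k) : qBinomial q n k = 0 := by
  induction n generalizing k with
  | zero => obtain ⟨k, rfl⟩ := Nat.exists_eq_succ_of_ne_zero h.ne'; rfl
  | succ n ih =>
    obtain ⟨k, rfl⟩ := Nat.exists_eq_succ_of_ne_zero (Nat.ne_zero_of_lt h)
    rw [qBinomial_succ_succ, ih (by omega), ih (by omega), mul_zero, add_zero]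

@[simp] theorem qBinomial_self (n : ℕ) : qBinomial q n n = 1 := by
  induction n with
  | zero => rfl
  | succ n ih => simp [qBinomial_succ_succ, ih, qBinomial_eq_zero_of_lt q n.lt_add_one]

theorem qBinomial_mul_qPochhammer {n k : ℕ} (h : k ≤ n) :
    qBinomial q n k * (qPochhammer q q k * qPochhammer q q (n - k)) = qPochhammer q q n := by
  induction n generalizing k with
  | zero => obtain rfl := Nat.le_zero.mp h; simp
  | succ n ih =>
    cases k with
    | zero => simp
    | succ k =>
      obtain hkn | rfl := (Nat.lt_succ_iff.mp h).lt_or_eq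
      · obtain ⟨m, rfl⟩ := Nat.exists_eq_add_of_lt hkn
        have ih₁ : qBinomial q (k + m + 1) (k + 1) * (qPochhammer q q (k + 1) * qPochhammer q q m)
            = qPochhammer q q (k + m + 1) := by simpa using ih hkn
        have ih₂ : qBinomial q (k + m + 1) k * (qPochhammer q q k * qPochhammer q q (m + 1))
            = qPochhammer q q (k + m + 1) := by
          simpa [show k + m + 1 - k = m + 1 by omega] using ih hkn.le
        rw [qBinomial_succ_succ, show k + m + 1 + 1 - (k + 1) = m + 1 by omega,
          show k + m + 1 - k = m + 1 by omega]
        rw [qPochhammer_self_succ] at ih₁ ih₂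
        rw [qPochhammer_self_succ, qPochhammer_self_succ, qPochhammer_self_succ]
        linear_combination (1 - q ^ (m + 1)) * ih₁ + q ^ (m + 1) * (1 - q ^ (k + 1)) * ih₂
      · simp

theorem qPochhammer_eq_sum (x : R) (n : ℕ) :
    qPochhammer q x n =
      ∑ k ∈ range (n + 1), (-1) ^ k * q ^ k.choose 2 * qBinomial q n k * x ^ k := by
  induction n with
  | zero => simp
  | succ n ih =>
    let T (n k : ℕ) : R := (-1) ^ k * q ^ k.choose 2 * qBinomial q n k * x ^ k
    have hT : ∀ k ∈ range (n + 1), T (n + 1) (k + 1) = T n (k + 1) - x * q ^ n * T n k := by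
      intro k hk
      have hqk : q ^ (k + 1).choose 2 * q ^ (n - k) = q ^ n * q ^ k.choose 2 := by
        rw [← pow_add, ← pow_add, Nat.choose_two_succ]
        have := mem_range.mp hk
        congr 1
        omega
      simp only [T, qBinomial_succ_succ]
      linear_combination (-1) ^ (k + 1) * qBinomial q n k * x ^ (k + 1) * hqk
    have hshift : ∑ k ∈ range (n + 1), T n (k + 1) + T (n + 1) 0 = ∑ k ∈ range (n + 1), T n k := by
      rw [show T (n + 1) 0 = T n 0 by simp [T], ← sum_range_succ', sum_range_succ,
        show T n (n + 1) = 0 by simp [T, qBinomial_eq_zero_of_lt q n.lt_add_one], add_zero]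
    calc qPochhammer q x (n + 1) = (∑ k ∈ range (n + 1), T n k) * (1 - x * q ^ n) := by
          rw [qPochhammer_succ, ih]
      _ = ∑ k ∈ range (n + 1), (T n (k + 1) - x * q ^ n * T n k) + T (n + 1) 0 := by
          rw [sum_sub_distrib, ← mul_sum, ← hshift]; ring
      _ = ∑ k ∈ range (n + 2), T (n + 1) k := by rw [← sum_congr rfl hT, ← sum_range_succ']

/-- The paper's `f_{d,1}(s, q)`, the numerator of the Quot zeta function of `R^d` for the node
`R = 𝔽_q[[X,Y]]/(Y² - X²)`. -/
def linkNumerator (d : ℕ) (s : R) : R :=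
  ∑ r ∈ range (d + 1),
    (-1) ^ r * q ^ r.choose 2 * s ^ r * qBinomial q d r * qPochhammer q (s * q ^ (d - r + 1)) r

end CommRing

section Field

variable {K : Type*} [Field K] {q : K}

theorem qPochhammer_self_ne_zero (hq : ∀ i : ℕ, 1 ≤ i → q ^ i ≠ 1) (n : ℕ) :
    qPochhammer q q n ≠ 0 :=
  prod_ne_zero_iff.mpr fun i _ => by
    rw [← pow_succ']
    exact sub_ne_zero.mpr (hq (i + 1) i.succ_pos).symm

theorem qBinomial_eq_div (hq : ∀ i : ℕ, 1 ≤ i → q ^ i ≠ 1) {n k : ℕ} (h : k ≤ n) :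
    qBinomial q n k = qPochhammer q q n / (qPochhammer q q k * qPochhammer q q (n - k)) := by
  rw [eq_div_iff (mul_ne_zero (qPochhammer_self_ne_zero hq k) (qPochhammer_self_ne_zero hq _)),
    qBinomial_mul_qPochhammer q h]

theorem qBinomial_symm (hq : ∀ i : ℕ, 1 ≤ i → q ^ i ≠ 1) {n k : ℕ} (h : k ≤ n) :
    qBinomial q n (n - k) = qBinomial q n k := by
  rw [qBinomial_eq_div hq h, qBinomial_eq_div hq (n.sub_le k), Nat.sub_sub_self h, mul_comm]

theorem qBinomial_mul_qBinomial (hq : ∀ i : ℕ, 1 ≤ i → q ^ i ≠ 1) {n k j : ℕ} (h : k + j ≤ n) :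
    qBinomial q n (k + j) * qBinomial q (k + j) k = qBinomial q n k * qBinomial q (n - k) j := by
  have hP := qPochhammer_self_ne_zero hq
  rw [qBinomial_eq_div hq h, qBinomial_eq_div hq (k.le_add_right j), qBinomial_eq_div hq (by omega),
    qBinomial_eq_div hq (by omega), Nat.add_sub_cancel_left, show n - k - j = n - (k + j) by omega,
    div_mul_div_comm, div_mul_div_comm, div_eq_div_iff (by simp [hP]) (by simp [hP])]
  ring

/-- The hypothesis says `y = q^{1-r} / x`. -/
theorem qPochhammer_mul_pow_mul_pow_choose_two (hq : q ≠ 0) {x y : K} {r : ℕ}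
    (h : y * x * q ^ r = q) :
    qPochhammer q y r * (x ^ r * q ^ r.choose 2) = (-1) ^ r * qPochhammer q x r := by
  have hprod : x ^ r * q ^ r.choose 2 = ∏ i ∈ range r, x * q ^ (r - 1 - i) := by
    rw [prod_mul_distrib, prod_const, card_range, prod_pow_eq_pow_sum,
      sum_range_reflect (fun i => i) r, sum_range_id, Nat.choose_two_right]
  have hfactor : ∀ i ∈ range r, (1 - y * q ^ i) * (x * q ^ (r - 1 - i)) =
      -1 * (1 - x * q ^ (r - 1 - i)) := by
    intro i hi
    have hi := mem_range.mp hi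
    have h' : y * x * q ^ (r - 1) = 1 := by
      refine mul_left_cancel₀ hq ?_
      calc q * (y * x * q ^ (r - 1)) = y * x * q ^ (r - 1 + 1) := by ring
        _ = q * 1 := by rw [Nat.sub_add_cancel (by omega : 1 ≤ r), h, mul_one]
    have hexp : q ^ i * q ^ (r - 1 - i) = q ^ (r - 1) := by rw [← pow_add]; congr 1; omega
    linear_combination -y * x * hexp - h'
  rw [hprod, qPochhammer, ← prod_mul_distrib, prod_congr rfl hfactor, prod_mul_distrib,
    prod_const, card_range, prod_range_reflect (fun i => 1 - x * q ^ i) r, qPochhammer]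

theorem linkNumerator_eq_sum (hq : ∀ i : ℕ, 1 ≤ i → q ^ i ≠ 1) (d : ℕ) (t : K) :
    linkNumerator q d t =
      ∑ k ∈ range (d + 1), q ^ (d * k) * t ^ (2 * k) * qBinomial q d k * qPochhammer q t (d - k) := by
  have hexp : ∀ k j, k + j ≤ d →
      (k + j).choose 2 + k.choose 2 + (d - (k + j) + 1) * k = d * k + j.choose 2 := by
    intro k j h
    obtain ⟨e, rfl⟩ := Nat.exists_eq_add_of_le h
    rw [Nat.add_sub_cancel_left, Nat.choose_two_add]
    nlinarith [Nat.two_mul_choose_two_add_self k]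
  calc linkNumerator q d t
      = ∑ r ∈ range (d + 1), ∑ k ∈ range (r + 1),
          (-1) ^ r * q ^ r.choose 2 * t ^ r * qBinomial q d r *
            ((-1) ^ k * q ^ k.choose 2 * qBinomial q r k * (t * q ^ (d - r + 1)) ^ k) := by
        simp only [linkNumerator, qPochhammer_eq_sum, mul_sum]
    _ = ∑ k ∈ range (d + 1), ∑ j ∈ range (d - k + 1),
          q ^ (d * k) * t ^ (2 * k) * qBinomial q d k *
            ((-1) ^ j * q ^ j.choose 2 * qBinomial q (d - k) j * t ^ j) := by
        rw [sum_range_sum_range_succ_comm]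
        refine sum_congr rfl fun k hk => sum_congr rfl fun j hj => ?_
        have h : k + j ≤ d := by simp only [mem_range] at hk hj; omega
        calc _ = (-1) ^ (j + 2 * k) * q ^ ((k + j).choose 2 + k.choose 2 + (d - (k + j) + 1) * k) *
                t ^ (j + 2 * k) * (qBinomial q d (k + j) * qBinomial q (k + j) k) := by ring
          _ = _ := by
            rw [hexp k j h, qBinomial_mul_qBinomial hq h, pow_add, pow_mul, neg_one_sq, one_pow]
            ring
    _ = _ := by simp only [qPochhammer_eq_sum, mul_sum]

theorem pow_mul_linkNumerator_inv (hq₀ : q ≠ 0) (hq : ∀ i : ℕ, 1 ≤ i → q ^ i ≠ 1) (d : ℕ)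
    {t : K} (ht : t ≠ 0) :
    q ^ (d ^ 2) * t ^ (2 * d) * linkNumerator q d ((q ^ d)⁻¹ * t⁻¹) =
      ∑ k ∈ range (d + 1), q ^ (d * k) * t ^ (2 * k) * qBinomial q d k * qPochhammer q t (d - k) := by
  rw [← sum_range_reflect, linkNumerator, mul_sum]
  refine sum_congr rfl fun r hmem => ?_
  have hr : r ≤ d := Nat.lt_succ_iff.mp (mem_range.mp hmem)
  rw [show d + 1 - 1 - r = d - r by omega, Nat.sub_sub_self hr, qBinomial_symm hq hr]
  have hrev := qPochhammer_mul_pow_mul_pow_choose_two hq₀ (x := t)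
    (y := (q ^ d)⁻¹ * t⁻¹ * q ^ (d - r + 1)) (r := r) (by
      obtain ⟨e, rfl⟩ := Nat.exists_eq_add_of_le hr
      rw [show r + e - r + 1 = e + 1 by omega]
      field_simp
      ring)
  have hpow : q ^ (d ^ 2) * t ^ (2 * d) * ((q ^ d)⁻¹ * t⁻¹) ^ r =
      q ^ (d * (d - r)) * t ^ (2 * (d - r)) * t ^ r := by
    have hunit : (q ^ d * t) ^ r * ((q ^ d)⁻¹ * t⁻¹) ^ r = 1 := by
      rw [← mul_pow, mul_mul_mul_comm, mul_inv_cancel₀ (pow_ne_zero _ hq₀), mul_inv_cancel₀ ht,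
        one_mul, one_pow]
    obtain ⟨e, rfl⟩ := Nat.exists_eq_add_of_le hr
    rw [Nat.add_sub_cancel_left]
    linear_combination q ^ ((r + e) * e) * t ^ (2 * e) * t ^ r * hunit
  have hsign : ((-1) ^ r * (-1) ^ r : K) = 1 := by rw [← mul_pow]; simp
  linear_combination (-1) ^ r * q ^ r.choose 2 * qBinomial q d r *
      qPochhammer q ((q ^ d)⁻¹ * t⁻¹ * q ^ (d - r + 1)) r * hpow +
    q ^ (d * (d - r)) * t ^ (2 * (d - r)) * (-1) ^ r * qBinomial q d r * hrev +
    q ^ (d * (d - r)) * t ^ (2 * (d - r)) * qBinomial q d r * qPochhammer q t r * hsign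

end Field

/-- Functional equation for the (2,2) link, m = 1.  With
`f_{d,1}(t,q) = ∑_{r=0}^d (-1)^r q^{r(r-1)/2} t^r [d r]_q (t q^{d-r+1};q)_r`, the
functional equation `f_{d,1}(t,q) = q^{d²} t^{2d} f_{d,1}(q^{-d} t⁻¹, q)` holds (as an
identity of rational functions; stated here for all rational `t ≠ 0` and `q ≠ 0` with
`q` not a nontrivial root of unity, so that all denominators are nonzero). -/
theorem statement16 (d : ℕ) (t q : ℚ) (ht : t ≠ 0) (hq0 : q ≠ 0)
    (hq1 : ∀ i : ℕ, 1 ≤ i → q ^ i ≠ 1) :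
    let poch : ℚ → ℕ → ℚ := fun x n => ∏ i ∈ Finset.range n, (1 - x * q ^ i)
    let qbin : ℕ → ℕ → ℚ := fun n r => poch q n / (poch q r * poch q (n - r))
    let f : ℚ → ℚ := fun s =>
      ∑ r ∈ Finset.range (d + 1),
        (-1 : ℚ) ^ r * q ^ (r.choose 2) * s ^ r * qbin d r * poch (s * q ^ (d - r + 1)) r
    f t = q ^ (d ^ 2) * t ^ (2 * d) * f ((q ^ d)⁻¹ * t⁻¹) := by
  intro poch qbin f
  have hf : ∀ s, f s = linkNumerator q d s := fun s =>
    sum_congr rfl fun r hr => by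
      rw [qBinomial_eq_div hq1 (Nat.lt_succ_iff.mp (mem_range.mp hr))]
      rfl
  rw [hf, hf, linkNumerator_eq_sum hq1, pow_mul_linkNumerator_inv hq0 hq1 d ht]
end
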